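/- arXiv:0903.4475 — 4 statements merged into one kernel-verified Lean document; each statement's English description precedes it below -/
import Mathlib

section
/- Let μ be a Borel probability measure on I = [0,∞] (the one-point compactification of [0,∞)), let T > 0 and set p = μ[0,T). Assume 0 < p < 1 and p < α < 1. Then inf{ H(ν|μ) : ν a Borel probability measure on I with ν[0,T) ≥ α } = ħ(α,p), and the infimum is attained at the tilted measure μ*_α, i.e. ħ(α,p) = H(μ*_α|μ). -/
open MeasureTheory Filter Set
open scoped ENNReal NNReal Classical

noncomputable section


/-- `ħ(a,b)`: binary relative entropy (with the convention `Real.log 0 = 0`,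
so that `0 · ln 0 = 0`). -/
def hbar (a b : ℝ) : ℝ := a * Real.log (a / b) + (1 - a) * Real.log ((1 - a) / (1 - b))

/-- Relative entropy `H(ν|μ)` of Borel probability measures on `I = [0,∞]`
(realized as `ℝ≥0∞`): `∫ ln (dν/dμ) dν` if `ν ≪ μ` (the value being `∞` if the
integral diverges), and `∞` otherwise. -/
def relEntropy (ν μ : Measure ℝ≥0∞) : ℝ≥0∞ :=
  if ν ≪ μ ∧ Integrable (fun t => Real.log ((ν.rnDeriv μ t).toReal)) ν then
    ENNReal.ofReal (∫ t, Real.log ((ν.rnDeriv μ t).toReal) ∂ν)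
  else ⊤

/-- The tilted measure `μ*_a`:
`μ*_a(A) = (a/p)·μ(A ∩ [0,T)) + ((1−a)/(1−p))·μ(A ∩ [T,∞])`. -/
def tiltedMu (μ : Measure ℝ≥0∞) (T a p : ℝ) : Measure ℝ≥0∞ :=
  ENNReal.ofReal (a / p) • μ.restrict (Set.Iio (ENNReal.ofReal T)) +
    ENNReal.ofReal ((1 - a) / (1 - p)) • μ.restrict (Set.Ici (ENNReal.ofReal T))

instance tiltedMu.instIsFiniteMeasure (μ : Measure ℝ≥0∞) [IsFiniteMeasure μ] (T a p : ℝ) :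
    IsFiniteMeasure (tiltedMu μ T a p) := by
  constructor
  rw [tiltedMu]
  simp only [Measure.add_apply, Measure.smul_apply, smul_eq_mul]
  exact ENNReal.add_lt_top.mpr ⟨ENNReal.mul_lt_top ENNReal.ofReal_lt_top (measure_lt_top _ _),
    ENNReal.mul_lt_top ENNReal.ofReal_lt_top (measure_lt_top _ _)⟩

/-! Gibbs' variational inequality: if `∫ exp f dμ = 1` then `∫ f dν ≤ H(ν|μ)` for every
probability measure `ν`, since the gap is `H(ν | μ.tilted f) ≥ 0`, and equality holds at
`ν = μ.tilted f`. The tilted measure `μ*_α` is `μ.tilted f` for the step function `f` equal to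
`log (α/p)` on `[0,T)` and `log ((1-α)/(1-p))` on `[T,∞]`, and
`∫ f dν = ħ(α,p) + (ν[0,T) - α) (log (α/p) - log ((1-α)/(1-p)))`,
whose second term is nonnegative as soon as `ν[0,T) ≥ α > p`. -/

open Real InformationTheory

lemma relEntropy_eq_klDiv (ν μ : Measure ℝ≥0∞) [IsProbabilityMeasure ν]
    [IsProbabilityMeasure μ] :
    relEntropy ν μ = klDiv ν μ := by
  by_cases h : ν ≪ μ ∧ Integrable (llr ν μ) ν
  · rw [relEntropy, ← llr_def, if_pos h, klDiv_of_ac_of_integrable h.1 h.2]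
    simp only [probReal_univ, add_sub_cancel_right]
  · rw [relEntropy, ← llr_def, if_neg h, eq_comm, klDiv_eq_top_iff]
    exact fun hνμ hint ↦ h ⟨hνμ, hint⟩

section Gibbs

variable {Ω : Type*} [MeasurableSpace Ω] {μ ν : Measure Ω} [IsProbabilityMeasure μ]
  {f : Ω → ℝ}

lemma ofReal_integral_sub_log_integral_exp_le_klDiv [IsProbabilityMeasure ν]
    (hfν : Integrable f ν) (hfμ : Integrable (fun x ↦ exp (f x)) μ) :
    ENNReal.ofReal (∫ x, f x ∂ν - log (∫ x, exp (f x) ∂μ)) ≤ klDiv ν μ := by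
  by_cases h : ν ≪ μ ∧ Integrable (llr ν μ) ν
  swap
  · rw [klDiv_eq_top_iff.mpr fun hνμ hint ↦ h ⟨hνμ, hint⟩]
    exact le_top
  obtain ⟨hνμ, hint⟩ := h
  have := isProbabilityMeasure_tilted hfμ
  have hgibbs : 0 ≤ ∫ x, llr ν (μ.tilted f) x ∂ν := by
    rw [← toReal_klDiv_of_measure_eq (hνμ.trans (absolutelyContinuous_tilted hfμ)) (by simp)]
    exact ENNReal.toReal_nonneg
  rw [integral_llr_tilted_right hνμ hfν hfμ hint] at hgibbs
  rw [klDiv_of_ac_of_integrable hνμ hint]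
  exact ENNReal.ofReal_le_ofReal (by simp only [probReal_univ, add_sub_cancel_right]; linarith)

lemma klDiv_tilted_left (hfμ : Integrable (fun x ↦ exp (f x)) μ)
    (hf : Integrable f (μ.tilted f)) :
    klDiv (μ.tilted f) μ =
      ENNReal.ofReal (∫ x, f x ∂μ.tilted f - log (∫ x, exp (f x) ∂μ)) := by
  have := isProbabilityMeasure_tilted hfμ
  have hllr : llr (μ.tilted f) μ =ᵐ[μ.tilted f] fun x ↦ f x - log (∫ x, exp (f x) ∂μ) :=
    (tilted_absolutelyContinuous μ f).ae_le (log_rnDeriv_tilted_left_self hfμ)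
  rw [klDiv_of_ac_of_integrable (tilted_absolutelyContinuous μ f)
      ((hf.sub (integrable_const _)).congr hllr.symm),
    integral_congr_ae hllr, integral_sub hf (integrable_const _)]
  simp

end Gibbs

section StepTilt

variable {Ω : Type*} {A : Set Ω} {a p : ℝ}

def stepLogDensity (A : Set Ω) (a p : ℝ) : Ω → ℝ :=
  A.piecewise (fun _ ↦ log (a / p)) (fun _ ↦ log ((1 - a) / (1 - p)))

lemma exp_stepLogDensity (hp0 : 0 < p) (hp1 : p < 1) (ha0 : 0 < a) (ha1 : a < 1) :
    (fun x ↦ exp (stepLogDensity A a p x)) =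
      A.piecewise (fun _ ↦ a / p) (fun _ ↦ (1 - a) / (1 - p)) := by
  ext x
  by_cases hx : x ∈ A
  · simp only [stepLogDensity, piecewise_eq_of_mem _ _ _ hx, exp_log (div_pos ha0 hp0)]
  · simp only [stepLogDensity, piecewise_eq_of_notMem _ _ _ hx,
      exp_log (div_pos (sub_pos.2 ha1) (sub_pos.2 hp1))]

variable [MeasurableSpace Ω] {ν : Measure Ω}

lemma integral_piecewise_const [IsProbabilityMeasure ν] (hA : MeasurableSet A) (b c : ℝ) :
    ∫ x, A.piecewise (fun _ ↦ b) (fun _ ↦ c) x ∂ν =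
      ν.real A * b + (1 - ν.real A) * c := by
  rw [integral_piecewise hA (integrable_const _).integrableOn (integrable_const _).integrableOn,
    setIntegral_const, setIntegral_const, probReal_compl_eq_one_sub hA, smul_eq_mul, smul_eq_mul]

lemma integrable_stepLogDensity [IsFiniteMeasure ν] (hA : MeasurableSet A) (a p : ℝ) :
    Integrable (stepLogDensity A a p) ν :=
  Integrable.piecewise hA (integrable_const _).integrableOn (integrable_const _).integrableOn

lemma integral_stepLogDensity [IsProbabilityMeasure ν] (hA : MeasurableSet A) (a p : ℝ) :
    ∫ x, stepLogDensity A a p x ∂ν =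
      hbar a p + (ν.real A - a) * (log (a / p) - log ((1 - a) / (1 - p))) := by
  rw [stepLogDensity, integral_piecewise_const hA, hbar]
  ring

lemma integral_exp_stepLogDensity [IsProbabilityMeasure ν] (hA : MeasurableSet A)
    (hνA : ν.real A = p) (hp0 : 0 < p) (hp1 : p < 1) (ha0 : 0 < a) (ha1 : a < 1) :
    ∫ x, exp (stepLogDensity A a p x) ∂ν = 1 := by
  rw [exp_stepLogDensity hp0 hp1 ha0 ha1, integral_piecewise_const hA, hνA]
  field_simp [(sub_pos.2 hp1).ne']
  ring

end StepTilt

section TiltedMu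

variable {μ : Measure ℝ≥0∞} {T a p : ℝ}

lemma tiltedMu_real_Iio (ha : 0 ≤ a) (hp : 0 ≤ p) :
    (tiltedMu μ T a p).real (Iio (ENNReal.ofReal T)) =
      a / p * μ.real (Iio (ENNReal.ofReal T)) := by
  simp [tiltedMu, measureReal_def, Measure.restrict_apply measurableSet_Iio, Iio_inter_Ici,
    ENNReal.toReal_mul, div_nonneg ha hp]

lemma tiltedMu_eq_tilted [IsProbabilityMeasure μ] (hμA : μ.real (Iio (ENNReal.ofReal T)) = p)
    (hp0 : 0 < p) (hp1 : p < 1) (ha0 : 0 < a) (ha1 : a < 1) :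
    tiltedMu μ T a p = μ.tilted (stepLogDensity (Iio (ENNReal.ofReal T)) a p) := by
  have hA : MeasurableSet (Iio (ENNReal.ofReal T)) := measurableSet_Iio
  have hdens : (fun x ↦ ENNReal.ofReal (exp (stepLogDensity (Iio (ENNReal.ofReal T)) a p x) /
      ∫ x, exp (stepLogDensity (Iio (ENNReal.ofReal T)) a p x) ∂μ)) =
      (Iio (ENNReal.ofReal T)).indicator (fun _ ↦ ENNReal.ofReal (a / p)) +
        (Iio (ENNReal.ofReal T))ᶜ.indicator (fun _ ↦ ENNReal.ofReal ((1 - a) / (1 - p))) := by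
    rw [integral_exp_stepLogDensity hA hμA hp0 hp1 ha0 ha1, indicator_add_compl_eq_piecewise]
    ext x
    by_cases hx : x ∈ Iio (ENNReal.ofReal T) <;>
      simp [hx, stepLogDensity, exp_log (div_pos ha0 hp0),
        exp_log (div_pos (sub_pos.2 ha1) (sub_pos.2 hp1))]
  rw [Measure.tilted, hdens, withDensity_add_left (measurable_const.indicator hA),
    withDensity_indicator hA, withDensity_indicator hA.compl, withDensity_const,
    withDensity_const, tiltedMu, compl_Iio]

end TiltedMu

theorem stmt0_general (μ : Measure ℝ≥0∞) [IsProbabilityMeasure μ] (T p α : ℝ)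
    (hpμ : μ (Set.Iio (ENNReal.ofReal T)) = ENNReal.ofReal p)
    (hp0 : 0 < p) (hp1 : p < 1) (hpα : p < α) (hα1 : α < 1) :
    sInf {x : ℝ≥0∞ | ∃ ν : Measure ℝ≥0∞, IsProbabilityMeasure ν ∧
        ENNReal.ofReal α ≤ ν (Set.Iio (ENNReal.ofReal T)) ∧ x = relEntropy ν μ}
      = ENNReal.ofReal (hbar α p) ∧
    relEntropy (tiltedMu μ T α p) μ = ENNReal.ofReal (hbar α p) := by
  set A := Iio (ENNReal.ofReal T)
  set f := stepLogDensity A α p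
  have hA : MeasurableSet A := measurableSet_Iio
  have hα0 : 0 < α := hp0.trans hpα
  have hμA : μ.real A = p := by rw [measureReal_def, hpμ, ENNReal.toReal_ofReal hp0.le]
  have hZ : ∫ x, exp (f x) ∂μ = 1 := integral_exp_stepLogDensity hA hμA hp0 hp1 hα0 hα1
  have hexp : Integrable (fun x ↦ exp (f x)) μ := integrable_of_integral_eq_one hZ
  have htilt : tiltedMu μ T α p = μ.tilted f := tiltedMu_eq_tilted hμA hp0 hp1 hα0 hα1
  have htiltA : (tiltedMu μ T α p).real A = α := by
    rw [tiltedMu_real_Iio hα0.le hp0.le, hμA, div_mul_cancel₀ _ hp0.ne']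
  have := isProbabilityMeasure_tilted hexp
  have hval : relEntropy (tiltedMu μ T α p) μ = ENNReal.ofReal (hbar α p) := by
    rw [htilt, relEntropy_eq_klDiv, klDiv_tilted_left hexp (integrable_stepLogDensity hA α p),
      hZ, Real.log_one, sub_zero, integral_stepLogDensity hA, ← htilt, htiltA, sub_self, zero_mul,
      add_zero]
  refine ⟨le_antisymm (sInf_le ⟨_, htilt ▸ this, ?_, hval.symm⟩) (le_sInf ?_), hval⟩
  · rw [← ofReal_measureReal, htiltA]
  rintro _ ⟨ν, hν, hνA, rfl⟩
  have hνA' : α ≤ ν.real A := (ENNReal.ofReal_le_iff_le_toReal (measure_ne_top ν A)).1 hνA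
  have hlog : log ((1 - α) / (1 - p)) ≤ log (α / p) :=
    (log_nonpos (div_nonneg (by linarith) (by linarith))
      ((div_le_one (by linarith)).2 (by linarith))).trans (log_nonneg ((one_le_div hp0).2 hpα.le))
  calc ENNReal.ofReal (hbar α p)
      ≤ ENNReal.ofReal (∫ x, f x ∂ν - log (∫ x, exp (f x) ∂μ)) := by
        rw [hZ, Real.log_one, sub_zero, integral_stepLogDensity hA]
        exact ENNReal.ofReal_le_ofReal
          (le_add_of_nonneg_right (mul_nonneg (sub_nonneg.2 hνA') (sub_nonneg.2 hlog)))
    _ ≤ klDiv ν μ :=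
        ofReal_integral_sub_log_integral_exp_le_klDiv (integrable_stepLogDensity hA α p) hexp
    _ = relEntropy ν μ := (relEntropy_eq_klDiv ν μ).symm

theorem stmt0 (μ : Measure ℝ≥0∞) [IsProbabilityMeasure μ] (T p α : ℝ)
    (hT : 0 < T) (hpμ : μ (Set.Iio (ENNReal.ofReal T)) = ENNReal.ofReal p)
    (hp0 : 0 < p) (hp1 : p < 1) (hpα : p < α) (hα1 : α < 1) :
    sInf {x : ℝ≥0∞ | ∃ ν : Measure ℝ≥0∞, IsProbabilityMeasure ν ∧
        ENNReal.ofReal α ≤ ν (Set.Iio (ENNReal.ofReal T)) ∧ x = relEntropy ν μ}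
      = ENNReal.ofReal (hbar α p) ∧
    relEntropy (tiltedMu μ T α p) μ = ENNReal.ofReal (hbar α p) :=
  stmt0_general μ T p α hpμ hp0 hp1 hpα hα1

end
end

section
/- Let μ and ν be Borel probability measures on I = [0,∞], let T > 0, suppose p = μ[0,T) ∈ (0,1) and that ν is absolutely continuous with respect to μ. Set α' = ν[0,T). Then H(ν|μ) = ħ(α',p) if and only if ν = μ*_{α'}. -/
open MeasureTheory Filter Set
open scoped ENNReal NNReal Classical

noncomputable section

/-!
Write `f = dν/dμ` and `A = [0,T)`. Since `H(ν|μ) = ∫ f log f dμ` and `t ↦ t log t` is strictly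
convex, Jensen's inequality on each of `A` and `Aᶜ` bounds `∫_A f log f dμ` below by
`ν(A) log (ν(A)/μ(A))` (and likewise on `Aᶜ`), with equality iff `f` is a.e. constant there.
The two bounds add up to `ħ(α', p) ≥ 0`, so `H(ν|μ) = ħ(α', p)` holds iff `f` is constant on
`A` and on `Aᶜ`, i.e. iff `ν` is the tilted measure `μ*_{α'}`, whose density is that step function.
-/

open Real InformationTheory

namespace MeasureTheory

variable {α : Type*} [MeasurableSpace α] {μ ν : Measure α} {f : α → ℝ} {s : Set α}

lemma mul_log_le_setIntegral_mul_log (hμs : μ s ≠ 0) (hμs' : μ s ≠ ∞)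
    (hf : ∀ᵐ x ∂μ.restrict s, 0 ≤ f x) (hfi : IntegrableOn f s μ)
    (hfl : IntegrableOn (fun x => f x * log (f x)) s μ) :
    (∫ x in s, f x ∂μ) * log ((∫ x in s, f x ∂μ) / μ.real s) ≤
      ∫ x in s, f x * log (f x) ∂μ := by
  have hpos : 0 < μ.real s := ENNReal.toReal_pos hμs hμs'
  have jensen := convexOn_mul_log.map_set_average_le continuous_mul_log.continuousOn isClosed_Ici
    hμs hμs' hf hfi hfl
  rw [setAverage_eq, setAverage_eq, smul_eq_mul, smul_eq_mul, inv_mul_eq_div] at jensen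
  calc (∫ x in s, f x ∂μ) * log ((∫ x in s, f x ∂μ) / μ.real s)
      = μ.real s * ((∫ x in s, f x ∂μ) / μ.real s * log ((∫ x in s, f x ∂μ) / μ.real s)) := by
        field_simp
    _ ≤ μ.real s * ((μ.real s)⁻¹ * ∫ x in s, f x * log (f x) ∂μ) := by gcongr
    _ = ∫ x in s, f x * log (f x) ∂μ := by field_simp

lemma ae_eq_const_of_setIntegral_mul_log_eq [IsFiniteMeasure μ] (hμs : μ s ≠ 0)
    (hf : ∀ᵐ x ∂μ.restrict s, 0 ≤ f x) (hfi : IntegrableOn f s μ)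
    (hfl : IntegrableOn (fun x => f x * log (f x)) s μ)
    (heq : (∫ x in s, f x ∂μ) * log ((∫ x in s, f x ∂μ) / μ.real s) =
      ∫ x in s, f x * log (f x) ∂μ) :
    f =ᵐ[μ.restrict s] fun _ => (∫ x in s, f x ∂μ) / μ.real s := by
  have hpos : 0 < μ.real s := ENNReal.toReal_pos hμs (measure_ne_top μ s)
  refine (strictConvexOn_mul_log.ae_eq_const_or_map_average_lt continuous_mul_log.continuousOn
    isClosed_Ici hf hfi hfl).elim (fun h => ?_) (fun hlt => ?_)
  · rwa [setAverage_eq, smul_eq_mul, inv_mul_eq_div] at h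
  · rw [setAverage_eq, setAverage_eq, smul_eq_mul, smul_eq_mul, inv_mul_eq_div, ← heq] at hlt
    field_simp at hlt
    exact absurd hlt (lt_irrefl _)

lemma withDensity_piecewise_const [DecidablePred (· ∈ s)] (hs : MeasurableSet s) (c d : ℝ≥0∞) :
    μ.withDensity (s.piecewise (fun _ => c) (fun _ => d)) =
      c • μ.restrict s + d • μ.restrict sᶜ := by
  rw [← Set.indicator_add_compl_eq_piecewise, withDensity_add_left (measurable_const.indicator hs),
    withDensity_indicator hs, withDensity_indicator hs.compl, withDensity_const, withDensity_const]

lemma eq_withDensity_piecewise_of_ae_eq [SigmaFinite μ] [SigmaFinite ν] (hac : ν ≪ μ)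
    [DecidablePred (· ∈ s)] (hs : MeasurableSet s) {c d : ℝ}
    (hc : (fun x => (ν.rnDeriv μ x).toReal) =ᵐ[μ.restrict s] fun _ => c)
    (hd : (fun x => (ν.rnDeriv μ x).toReal) =ᵐ[μ.restrict sᶜ] fun _ => d) :
    ν = μ.withDensity (s.piecewise (fun _ => ENNReal.ofReal c) (fun _ => ENNReal.ofReal d)) := by
  conv_lhs => rw [← Measure.withDensity_rnDeriv_eq ν μ hac]
  refine withDensity_congr_ae (ae_of_ae_restrict_of_ae_restrict_compl s ?_ ?_)
  · filter_upwards [hc, ae_restrict_of_ae (Measure.rnDeriv_lt_top ν μ),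
      ae_restrict_mem hs] with x hx hfin hxs
    rw [Set.piecewise_eq_of_mem _ _ _ hxs, ← hx, ENNReal.ofReal_toReal hfin.ne]
  · filter_upwards [hd, ae_restrict_of_ae (Measure.rnDeriv_lt_top ν μ),
      ae_restrict_mem hs.compl] with x hx hfin hxs
    rw [Set.piecewise_eq_of_notMem _ _ _ hxs, ← hx, ENNReal.ofReal_toReal hfin.ne]

end MeasureTheory

lemma hbar_eq_klFun {a p : ℝ} (hp0 : 0 < p) (hp1 : p < 1) :
    hbar a p = p * klFun (a / p) + (1 - p) * klFun ((1 - a) / (1 - p)) := by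
  have : 1 - p ≠ 0 := by linarith
  simp only [hbar, klFun]
  field_simp
  ring

lemma hbar_nonneg {a p : ℝ} (ha0 : 0 ≤ a) (ha1 : a ≤ 1) (hp0 : 0 < p) (hp1 : p < 1) :
    0 ≤ hbar a p := by
  rw [hbar_eq_klFun hp0 hp1]
  have hq : 0 < 1 - p := by linarith
  have := klFun_nonneg (div_nonneg ha0 hp0.le)
  have := klFun_nonneg (div_nonneg (sub_nonneg.2 ha1) hq.le)
  positivity

section RelEntropy

variable {μ ν : Measure ℝ≥0∞}

lemma integrable_mul_log_of_relEntropy_ne_top [SigmaFinite μ] [SigmaFinite ν]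
    (h : relEntropy ν μ ≠ ⊤) :
    Integrable (fun x => (ν.rnDeriv μ x).toReal * log (ν.rnDeriv μ x).toReal) μ := by
  by_contra hJ
  refine h (if_neg ?_)
  rintro ⟨hac, hint⟩
  exact hJ ((integrable_rnDeriv_mul_log_iff hac).2 hint)

lemma relEntropy_eq_ofReal_integral_mul_log [SigmaFinite μ] [SigmaFinite ν] (hac : ν ≪ μ)
    (h : Integrable (fun x => (ν.rnDeriv μ x).toReal * log (ν.rnDeriv μ x).toReal) μ) :
    relEntropy ν μ =
      ENNReal.ofReal (∫ x, (ν.rnDeriv μ x).toReal * log (ν.rnDeriv μ x).toReal ∂μ) := by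
  rw [relEntropy, if_pos ⟨hac, (integrable_rnDeriv_mul_log_iff hac).1 h⟩,
    integral_rnDeriv_mul_log hac, llr_def]

lemma relEntropy_withDensity_piecewise [IsFiniteMeasure μ] {s : Set ℝ≥0∞}
    [DecidablePred (· ∈ s)] (hs : MeasurableSet s) {c d : ℝ} (hc : 0 ≤ c) (hd : 0 ≤ d) :
    relEntropy (μ.withDensity
        (s.piecewise (fun _ => ENNReal.ofReal c) (fun _ => ENNReal.ofReal d))) μ =
      ENNReal.ofReal (μ.real s * (c * log c) + μ.real sᶜ * (d * log d)) := by
  set g := s.piecewise (fun _ => ENNReal.ofReal c) (fun _ => ENNReal.ofReal d)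
  have hg : Measurable g := Measurable.piecewise hs measurable_const measurable_const
  have : SigmaFinite (μ.withDensity g) :=
    SigmaFinite.withDensity_of_ne_top' fun x => by by_cases hxs : x ∈ s <;> simp [g, hxs]
  have hJ : (fun x => ((μ.withDensity g).rnDeriv μ x).toReal *
        log ((μ.withDensity g).rnDeriv μ x).toReal) =ᵐ[μ]
      s.piecewise (fun _ => c * log c) (fun _ => d * log d) := by
    filter_upwards [Measure.rnDeriv_withDensity μ hg] with x hx
    by_cases hxs : x ∈ s <;> simp [hx, g, hxs, hc, hd]
  have hint : Integrable (s.piecewise (fun _ => c * log c) (fun _ => d * log d)) μ :=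
    Integrable.piecewise hs (integrable_const _).integrableOn (integrable_const _).integrableOn
  rw [relEntropy_eq_ofReal_integral_mul_log (withDensity_absolutelyContinuous μ g)
    (hint.congr hJ.symm), integral_congr_ae hJ, integral_piecewise hs
    (integrable_const _).integrableOn (integrable_const _).integrableOn, setIntegral_const,
    setIntegral_const, smul_eq_mul, smul_eq_mul]

lemma eq_withDensity_piecewise_of_relEntropy_eq_hbar [IsProbabilityMeasure μ]
    [IsProbabilityMeasure ν] (hac : ν ≪ μ) {s : Set ℝ≥0∞} [DecidablePred (· ∈ s)]
    (hs : MeasurableSet s) (hp0 : 0 < μ.real s) (hp1 : μ.real s < 1)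
    (h : relEntropy ν μ = ENNReal.ofReal (hbar (ν.real s) (μ.real s))) :
    ν = μ.withDensity (s.piecewise (fun _ => ENNReal.ofReal (ν.real s / μ.real s))
      (fun _ => ENNReal.ofReal ((1 - ν.real s) / (1 - μ.real s)))) := by
  set f := fun x => (ν.rnDeriv μ x).toReal
  have hf0 : ∀ t, ∀ᵐ x ∂μ.restrict t, 0 ≤ f x :=
    fun _ => ae_of_all _ fun _ => ENNReal.toReal_nonneg
  have hfi : Integrable f μ := Measure.integrable_toReal_rnDeriv
  have hJ := integrable_mul_log_of_relEntropy_ne_top (h ▸ ENNReal.ofReal_ne_top)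
  have hμs : μ s ≠ 0 := fun h0 => by simp [measureReal_def, h0] at hp0
  have hμsc : μ.real sᶜ = 1 - μ.real s := probReal_compl_eq_one_sub hs
  have hμsc0 : μ sᶜ ≠ 0 := fun h0 => by
    rw [measureReal_def, h0, ENNReal.toReal_zero] at hμsc; linarith
  have hfs : ∫ x in s, f x ∂μ = ν.real s := Measure.setIntegral_toReal_rnDeriv hac s
  have hfsc : ∫ x in sᶜ, f x ∂μ = 1 - ν.real s := by
    rw [Measure.setIntegral_toReal_rnDeriv hac, probReal_compl_eq_one_sub hs]
  have hles := mul_log_le_setIntegral_mul_log hμs (measure_ne_top μ s) (hf0 s)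
    hfi.integrableOn hJ.integrableOn
  have hlesc := mul_log_le_setIntegral_mul_log hμsc0 (measure_ne_top μ sᶜ) (hf0 sᶜ)
    hfi.integrableOn hJ.integrableOn
  rw [hfs] at hles
  rw [hfsc, hμsc] at hlesc
  have hbar0 := hbar_nonneg measureReal_nonneg (measureReal_le_one (μ := ν) (s := s)) hp0 hp1
  rw [relEntropy_eq_ofReal_integral_mul_log hac hJ, ← integral_add_compl hs hJ] at h
  rw [hbar] at h hbar0
  -- The two Jensen bounds add up to `hbar ≥ 0`, so the equality `h` forces equality in both.
  have hsum := (ENNReal.ofReal_eq_ofReal_iff (by linarith) hbar0).1 h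
  have hcs := ae_eq_const_of_setIntegral_mul_log_eq hμs (hf0 s) hfi.integrableOn
    hJ.integrableOn (by rw [hfs]; linarith)
  have hcsc := ae_eq_const_of_setIntegral_mul_log_eq hμsc0 (hf0 sᶜ) hfi.integrableOn
    hJ.integrableOn (by rw [hfsc, hμsc]; linarith)
  rw [hfs] at hcs
  rw [hfsc, hμsc] at hcsc
  exact eq_withDensity_piecewise_of_ae_eq hac hs hcs hcsc

end RelEntropy

lemma tiltedMu_eq_withDensity (μ : Measure ℝ≥0∞) (T a p : ℝ) :
    tiltedMu μ T a p = μ.withDensity ((Iio (ENNReal.ofReal T)).piecewise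
      (fun _ => ENNReal.ofReal (a / p)) (fun _ => ENNReal.ofReal ((1 - a) / (1 - p)))) := by
  rw [withDensity_piecewise_const measurableSet_Iio, compl_Iio, tiltedMu]

theorem stmt3_general (μ ν : Measure ℝ≥0∞) [IsProbabilityMeasure μ] [IsProbabilityMeasure ν]
    (T p : ℝ) (hpμ : μ (Set.Iio (ENNReal.ofReal T)) = ENNReal.ofReal p)
    (hp0 : 0 < p) (hp1 : p < 1) (hac : ν ≪ μ) :
    relEntropy ν μ = ENNReal.ofReal (hbar ((ν (Set.Iio (ENNReal.ofReal T))).toReal) p) ↔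
      ν = tiltedMu μ T ((ν (Set.Iio (ENNReal.ofReal T))).toReal) p := by
  set A := Iio (ENNReal.ofReal T)
  have hA : MeasurableSet A := measurableSet_Iio
  have hμA : μ.real A = p := by rw [measureReal_def, hpμ, ENNReal.toReal_ofReal hp0.le]
  subst hμA
  rw [tiltedMu_eq_withDensity, ← measureReal_def]
  constructor
  · exact eq_withDensity_piecewise_of_relEntropy_eq_hbar hac hA hp0 hp1
  · intro h
    have ha1 : ν.real A ≤ 1 := measureReal_le_one
    have hq : 0 < 1 - μ.real A := sub_pos.2 hp1
    conv_lhs => rw [h]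
    rw [relEntropy_withDensity_piecewise hA (div_nonneg measureReal_nonneg hp0.le)
      (div_nonneg (sub_nonneg.2 ha1) hq.le), probReal_compl_eq_one_sub hA, hbar]
    congr 1
    field_simp

theorem stmt3 (μ ν : Measure ℝ≥0∞) [IsProbabilityMeasure μ] [IsProbabilityMeasure ν]
    (T p : ℝ) (hT : 0 < T) (hpμ : μ (Set.Iio (ENNReal.ofReal T)) = ENNReal.ofReal p)
    (hp0 : 0 < p) (hp1 : p < 1) (hac : ν ≪ μ) :
    relEntropy ν μ = ENNReal.ofReal (hbar ((ν (Set.Iio (ENNReal.ofReal T))).toReal) p) ↔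
      ν = tiltedMu μ T ((ν (Set.Iio (ENNReal.ofReal T))).toReal) p :=
  stmt3_general μ ν T p hpμ hp0 hp1 hac

end
end

section
/- Let α ∈ (0,1). Then lim_{N→∞} sup{ | √(2π N α(1−α)) · C(N,n) · α^n · (1−α)^{N−n} − 1 | : n ∈ ℕ, n ≤ N, Nα ≤ n ≤ Nα + N^{1/4} } = 0, where C(N,n) is the binomial coefficient. (Equivalently: if γ_N = ∑_{k=1}^N X_k − Nα for i.i.d. Bernoulli(α) random variables X_k, then P(γ_N = s) = (1 + ε(s,N))/√(2π N α(1−α)) with sup over s ∈ {n − Nα : n ∈ ℤ, 0 ≤ n − Nα ≤ N^{1/4}, n ≤ N} of |ε(s,N)| tending to 0 as N → ∞.) -/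
/-!
By Stirling's formula, as `n, m → ∞` with `N = n + m`,
`√(2πNα(1-α)) C(N,n) αⁿ (1-α)ᵐ ~ √(a b) · aⁿ bᵐ` where `a = Nα/n` and `b = N(1-α)/m`.
Writing `t = n - Nα`, the elementary bounds `c - x - (x-c)²/c ≤ x log (c/x) ≤ c - x` give
`-t²/(Nα(1-α)) ≤ n log a + m log b ≤ 0`, so the right-hand side tends to `1` as soon as
`t²/N → 0`, which holds on the window `0 ≤ t ≤ N^{1/4}`. Convergence along the filter of pairs
`(N, n)` in the window, `N → ∞`, is exactly uniform convergence on the window.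
-/

open Filter Real Asymptotics Topology

lemma mul_log_div_le_sub {x c : ℝ} (hx : 0 < x) (hc : 0 < c) : x * log (c / x) ≤ c - x := by
  calc x * log (c / x) ≤ x * (c / x - 1) :=
        mul_le_mul_of_nonneg_left (log_le_sub_one_of_pos (by positivity)) hx.le
    _ = c - x := by field_simp

lemma sub_sub_sq_div_le_mul_log_div {x c : ℝ} (hx : 0 < x) (hc : 0 < c) :
    c - x - (x - c) ^ 2 / c ≤ x * log (c / x) := by
  calc c - x - (x - c) ^ 2 / c = - (x * (x / c - 1)) := by field_simp; ring
    _ ≤ - (x * log (x / c)) :=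
        neg_le_neg (mul_le_mul_of_nonneg_left (log_le_sub_one_of_pos (by positivity)) hx.le)
    _ = x * log (c / x) := by rw [← inv_div, log_inv, mul_neg, neg_neg]

lemma mul_log_add_mul_log_nonpos {N x α : ℝ} (hx : 0 < x) (hNx : 0 < N - x) (hα0 : 0 < α)
    (hα1 : α < 1) :
    x * log (N * α / x) + (N - x) * log (N * (1 - α) / (N - x)) ≤ 0 := by
  have hN : 0 < N := by linarith
  have h1 := mul_log_div_le_sub hx (mul_pos hN hα0)
  have h2 := mul_log_div_le_sub hNx (mul_pos hN (sub_pos.mpr hα1))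
  linarith

lemma neg_sq_div_le_mul_log_add_mul_log {N x α : ℝ} (hx : 0 < x) (hNx : 0 < N - x)
    (hα0 : 0 < α) (hα1 : α < 1) :
    -((x - N * α) ^ 2 / (N * α) + (x - N * α) ^ 2 / (N * (1 - α))) ≤
      x * log (N * α / x) + (N - x) * log (N * (1 - α) / (N - x)) := by
  have hN : 0 < N := by linarith
  have h1 := sub_sub_sq_div_le_mul_log_div hx (mul_pos hN hα0)
  have h2 := sub_sub_sq_div_le_mul_log_div hNx (mul_pos hN (sub_pos.mpr hα1))
  rw [show (N - x - N * (1 - α)) ^ 2 = (x - N * α) ^ 2 by ring] at h2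
  linarith

noncomputable def stirlingApprox (k : ℕ) : ℝ := √(2 * k * π) * (k / exp 1) ^ k

lemma sqrt_mul_sqrt_div_sqrt_mul_sqrt {N n m : ℕ} (hn : 0 < n) (hm : 0 < m)
    {α : ℝ} (hα0 : 0 ≤ α) (hα1 : α ≤ 1) :
    √(2 * π * N * α * (1 - α)) * (√(2 * N * π) / (√(2 * n * π) * √(2 * m * π))) =
      √(N * α / n * (N * (1 - α) / m)) := by
  have hn' : (0 : ℝ) < n := by exact_mod_cast hn
  have hm' : (0 : ℝ) < m := by exact_mod_cast hm
  have : 0 ≤ 1 - α := by linarith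
  rw [← sqrt_mul (by positivity), ← sqrt_div' _ (by positivity), ← sqrt_mul (by positivity)]
  congr 1
  field_simp

lemma div_exp_pow_mul_pow_mul_pow_div {N n m : ℕ} (hnm : n + m = N) (hn : 0 < n) (hm : 0 < m)
    (α : ℝ) :
    (N / exp 1) ^ N * α ^ n * (1 - α) ^ m / ((n / exp 1) ^ n * (m / exp 1) ^ m) =
      (N * α / n) ^ n * (N * (1 - α) / m) ^ m := by
  have hn' : (0 : ℝ) < n := by exact_mod_cast hn
  have hm' : (0 : ℝ) < m := by exact_mod_cast hm
  rw [← hnm, pow_add]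
  simp only [div_pow, mul_pow]
  field_simp

lemma sqrt_mul_stirlingApprox_div_mul_pow_mul_pow {N n m : ℕ} (hnm : n + m = N) (hn : 0 < n)
    (hm : 0 < m) {α : ℝ} (hα0 : 0 ≤ α) (hα1 : α ≤ 1) :
    √(2 * π * N * α * (1 - α)) * (stirlingApprox N / (stirlingApprox n * stirlingApprox m)) *
        α ^ n * (1 - α) ^ m =
      √(N * α / n * (N * (1 - α) / m)) * (N * α / n) ^ n * (N * (1 - α) / m) ^ m := by
  rw [mul_assoc _ ((N * α / n) ^ n), ← div_exp_pow_mul_pow_mul_pow_div hnm hn hm α,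
    ← sqrt_mul_sqrt_div_sqrt_mul_sqrt hn hm hα0 hα1]
  simp only [stirlingApprox]
  ring

section LocalLimit

variable {ι : Type*} {l : Filter ι} {N n : ι → ℕ} {α : ℝ}

lemma tendsto_sq_div_of_abs_le_rpow {β : ℝ} (hβ : β < 1 / 2) (hN : Tendsto N l atTop)
    (h : ∀ᶠ i in l, |(n i : ℝ) - N i * α| ≤ (N i : ℝ) ^ β) :
    Tendsto (fun i => ((n i : ℝ) - N i * α) ^ 2 / N i) l (𝓝 0) := by
  have hN' : Tendsto (fun i => (N i : ℝ)) l atTop := tendsto_natCast_atTop_atTop.comp hN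
  have hdecay : Tendsto (fun i => (N i : ℝ) ^ (2 * β - 1)) l (𝓝 0) := by
    have := (tendsto_rpow_neg_atTop (y := 1 - 2 * β) (by linarith)).comp hN'
    rwa [neg_sub] at this
  refine tendsto_of_tendsto_of_tendsto_of_le_of_le' tendsto_const_nhds hdecay
    (Eventually.of_forall fun i => by positivity) ?_
  filter_upwards [h, hN'.eventually_gt_atTop 0] with i hi hNi
  calc ((n i : ℝ) - N i * α) ^ 2 / N i ≤ ((N i : ℝ) ^ β) ^ 2 / N i := by
        rw [← sq_abs ((n i : ℝ) - N i * α)]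
        gcongr
    _ = (N i : ℝ) ^ (2 * β - 1) := by
        rw [rpow_sub_one hNi.ne', mul_comm, rpow_mul hNi.le]
        norm_cast

lemma tendsto_cast_div_of_tendsto_sq_div (hN : Tendsto N l atTop)
    (ht : Tendsto (fun i => ((n i : ℝ) - N i * α) ^ 2 / N i) l (𝓝 0)) :
    Tendsto (fun i => (n i : ℝ) / N i) l (𝓝 α) := by
  have hN' : Tendsto (fun i => (N i : ℝ)) l atTop := tendsto_natCast_atTop_atTop.comp hN
  have hdev : Tendsto (fun i => ((n i : ℝ) - N i * α) / N i) l (𝓝 0) := by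
    rw [tendsto_zero_iff_abs_tendsto_zero]
    have := (ht.mul (tendsto_inv_atTop_zero.comp hN')).sqrt
    rw [mul_zero, sqrt_zero] at this
    refine this.congr fun i => ?_
    simp only [Function.comp_apply, ← sqrt_sq_eq_abs]
    congr 1
    ring
  have := hdev.const_add α
  rw [add_zero] at this
  refine this.congr' ?_
  filter_upwards [hN'.eventually_gt_atTop 0] with i hi
  field_simp
  ring

lemma tendsto_cast_sub_div_of_tendsto_sq_div (hN : Tendsto N l atTop)
    (hnN : ∀ᶠ i in l, n i ≤ N i)
    (ht : Tendsto (fun i => ((n i : ℝ) - N i * α) ^ 2 / N i) l (𝓝 0)) :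
    Tendsto (fun i => ((N i - n i : ℕ) : ℝ) / N i) l (𝓝 (1 - α)) := by
  have hN' : Tendsto (fun i => (N i : ℝ)) l atTop := tendsto_natCast_atTop_atTop.comp hN
  refine ((tendsto_cast_div_of_tendsto_sq_div hN ht).const_sub 1).congr' ?_
  filter_upwards [hnN, hN'.eventually_gt_atTop 0] with i hi hNi
  rw [Nat.cast_sub hi]
  field_simp

lemma tendsto_atTop_of_tendsto_cast_div {c : ℝ} (hc : 0 < c) (hN : Tendsto N l atTop)
    (h : Tendsto (fun i => (n i : ℝ) / N i) l (𝓝 c)) : Tendsto n l atTop := by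
  have hN' : Tendsto (fun i => (N i : ℝ)) l atTop := tendsto_natCast_atTop_atTop.comp hN
  rw [← tendsto_natCast_atTop_iff (R := ℝ)]
  refine (h.pos_mul_atTop hc hN').congr' ?_
  filter_upwards [hN'.eventually_gt_atTop 0] with i hi
  field_simp

lemma tendsto_mul_div_of_tendsto_div {f g : ι → ℝ} {c : ℝ} (hc : c ≠ 0)
    (h : Tendsto (fun i => g i / f i) l (𝓝 c)) : Tendsto (fun i => f i * c / g i) l (𝓝 1) := by
  have := (tendsto_const_nhds (x := c)).div h hc
  rw [div_self hc] at this
  exact this.congr fun i => by rw [Pi.div_apply, div_div_eq_mul_div, mul_comm]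

lemma tendsto_mul_log_add_mul_log (hα0 : 0 < α) (hα1 : α < 1) (hN : Tendsto N l atTop)
    (hnN : ∀ᶠ i in l, n i ≤ N i)
    (ht : Tendsto (fun i => ((n i : ℝ) - N i * α) ^ 2 / N i) l (𝓝 0)) :
    Tendsto (fun i => (n i : ℝ) * log (N i * α / n i) +
      ((N i - n i : ℕ) : ℝ) * log (N i * (1 - α) / (N i - n i : ℕ))) l (𝓝 0) := by
  have hn := tendsto_atTop_of_tendsto_cast_div hα0 hN (tendsto_cast_div_of_tendsto_sq_div hN ht)
  have hm := tendsto_atTop_of_tendsto_cast_div (sub_pos.mpr hα1) hN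
    (tendsto_cast_sub_div_of_tendsto_sq_div hN hnN ht)
  have hlower : Tendsto (fun i => -(((n i : ℝ) - N i * α) ^ 2 / (N i * α) +
      ((n i : ℝ) - N i * α) ^ 2 / (N i * (1 - α)))) l (𝓝 0) := by
    simpa [div_div] using ((ht.div_const α).add (ht.div_const (1 - α))).neg
  have hpos : ∀ᶠ i in l, n i ≤ N i ∧ (0 : ℝ) < n i ∧ (0 : ℝ) < N i - n i := by
    filter_upwards [hnN, hn.eventually_gt_atTop 0, hm.eventually_gt_atTop 0] with i hi hni hmi
    exact ⟨hi, by exact_mod_cast hni, by rw [← Nat.cast_sub hi]; exact_mod_cast hmi⟩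
  refine tendsto_of_tendsto_of_tendsto_of_le_of_le' hlower tendsto_const_nhds ?_ ?_
  · filter_upwards [hpos] with i ⟨hi, hni, hmi⟩
    rw [Nat.cast_sub hi]
    exact neg_sq_div_le_mul_log_add_mul_log hni hmi hα0 hα1
  · filter_upwards [hpos] with i ⟨hi, hni, hmi⟩
    rw [Nat.cast_sub hi]
    exact mul_log_add_mul_log_nonpos hni hmi hα0 hα1

lemma tendsto_sqrt_mul_pow_mul_pow (hα0 : 0 < α) (hα1 : α < 1) (hN : Tendsto N l atTop)
    (hnN : ∀ᶠ i in l, n i ≤ N i)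
    (ht : Tendsto (fun i => ((n i : ℝ) - N i * α) ^ 2 / N i) l (𝓝 0)) :
    Tendsto (fun i => √(N i * α / n i * (N i * (1 - α) / (N i - n i : ℕ))) *
      (N i * α / n i) ^ n i * (N i * (1 - α) / (N i - n i : ℕ)) ^ (N i - n i)) l (𝓝 1) := by
  have hα1' : 0 < 1 - α := sub_pos.mpr hα1
  have hn := tendsto_cast_div_of_tendsto_sq_div hN ht
  have hm := tendsto_cast_sub_div_of_tendsto_sq_div hN hnN ht
  have ha := tendsto_mul_div_of_tendsto_div hα0.ne' hn
  have hb := tendsto_mul_div_of_tendsto_div hα1'.ne' hm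
  have hlim := (ha.mul hb).sqrt.mul (tendsto_mul_log_add_mul_log hα0 hα1 hN hnN ht).rexp
  rw [mul_one, sqrt_one, exp_zero, mul_one] at hlim
  refine hlim.congr' ?_
  filter_upwards [(tendsto_atTop_of_tendsto_cast_div hα0 hN hn).eventually_gt_atTop 0,
    (tendsto_atTop_of_tendsto_cast_div hα1' hN hm).eventually_gt_atTop 0,
    hN.eventually_gt_atTop 0] with i hni hmi hNi
  rw [exp_add, exp_nat_mul, exp_nat_mul, exp_log (by positivity), exp_log (by positivity),
    mul_assoc]

theorem tendsto_sqrt_mul_choose_mul_pow_mul_pow (hα0 : 0 < α) (hα1 : α < 1)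
    (hN : Tendsto N l atTop) (hnN : ∀ᶠ i in l, n i ≤ N i)
    (ht : Tendsto (fun i => ((n i : ℝ) - N i * α) ^ 2 / N i) l (𝓝 0)) :
    Tendsto (fun i => √(2 * π * N i * α * (1 - α)) * ((N i).choose (n i) : ℝ) *
      α ^ n i * (1 - α) ^ (N i - n i)) l (𝓝 1) := by
  have hn := tendsto_atTop_of_tendsto_cast_div hα0 hN (tendsto_cast_div_of_tendsto_sq_div hN ht)
  have hm := tendsto_atTop_of_tendsto_cast_div (sub_pos.mpr hα1) hN
    (tendsto_cast_sub_div_of_tendsto_sq_div hN hnN ht)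
  have hF : (fun k : ℕ => (k.factorial : ℝ)) ~[atTop] stirlingApprox :=
    Stirling.factorial_isEquivalent_stirling
  have hchoose := ((hF.comp_tendsto hN).div
    ((hF.comp_tendsto hn).mul (hF.comp_tendsto hm))).congr_left
    (hnN.mono fun i hi => (Nat.cast_choose ℝ hi).symm)
  refine ((((IsEquivalent.refl.mul hchoose).mul IsEquivalent.refl).mul
    IsEquivalent.refl).congr_right ?_).symm.tendsto_nhds
    (tendsto_sqrt_mul_pow_mul_pow hα0 hα1 hN hnN ht)
  filter_upwards [hnN, hn.eventually_gt_atTop 0, hm.eventually_gt_atTop 0] with i hi hni hmi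
  exact sqrt_mul_stirlingApprox_div_mul_pow_mul_pow (Nat.add_sub_cancel' hi) hni hmi hα0.le hα1.le

end LocalLimit

lemma tendsto_sSup_abs_of_tendsto_comap_fst_inf_principal {P : ℕ → ℕ → Prop} {g : ℕ → ℕ → ℝ}
    (h : Tendsto (fun p : ℕ × ℕ => g p.1 p.2) (atTop.comap Prod.fst ⊓ 𝓟 {p | P p.1 p.2})
      (𝓝 0)) :
    Tendsto (fun N => sSup {x : ℝ | ∃ n, P N n ∧ x = |g N n|}) atTop (𝓝 0) := by
  rw [Metric.tendsto_nhds]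
  intro ε hε
  have hg := (Metric.tendsto_nhds.mp h) (ε / 2) (half_pos hε)
  rw [eventually_inf_principal, eventually_comap] at hg
  filter_upwards [hg] with N hN
  have hle : sSup {x : ℝ | ∃ n, P N n ∧ x = |g N n|} ≤ ε / 2 := by
    refine Real.sSup_le ?_ (half_pos hε).le
    rintro x ⟨n, hn, rfl⟩
    simpa using (hN (N, n) rfl hn).le
  have hnonneg : 0 ≤ sSup {x : ℝ | ∃ n, P N n ∧ x = |g N n|} :=
    Real.sSup_nonneg fun x ⟨n, _, hx⟩ => hx ▸ abs_nonneg _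
  rw [Real.dist_0_eq_abs, abs_of_nonneg hnonneg]
  linarith

theorem stmt6 (α : ℝ) (hα0 : 0 < α) (hα1 : α < 1) :
    Tendsto (fun N : ℕ =>
        sSup {x : ℝ | ∃ n : ℕ, n ≤ N ∧ (N : ℝ) * α ≤ (n : ℝ) ∧
          (n : ℝ) ≤ (N : ℝ) * α + (N : ℝ) ^ ((1 : ℝ) / 4) ∧
          x = |Real.sqrt (2 * Real.pi * N * α * (1 - α)) * (N.choose n : ℝ) *
              α ^ n * (1 - α) ^ (N - n) - 1|})
      atTop (nhds 0) := by
  let P : ℕ → ℕ → Prop := fun N n =>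
    n ≤ N ∧ (N : ℝ) * α ≤ n ∧ (n : ℝ) ≤ N * α + (N : ℝ) ^ ((1 : ℝ) / 4)
  let l := atTop.comap Prod.fst ⊓ 𝓟 {p : ℕ × ℕ | P p.1 p.2}
  have hwindow : ∀ᶠ p in l, P p.1 p.2 := mem_inf_of_right (mem_principal_self _)
  have hN : Tendsto Prod.fst l atTop := tendsto_comap.mono_left inf_le_left
  have ht := tendsto_sq_div_of_abs_le_rpow (n := Prod.snd) (α := α) (β := 1 / 4) (by norm_num)
    hN (hwindow.mono fun _ ⟨_, hlow, hup⟩ => abs_le.mpr ⟨by linarith, by linarith⟩)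
  have hlim := tendsto_sqrt_mul_choose_mul_pow_mul_pow hα0 hα1 hN
    (hwindow.mono fun _ hp => hp.1) ht
  simpa only [P, and_assoc] using tendsto_sSup_abs_of_tendsto_comap_fst_inf_principal (P := P)
    (g := fun N n => √(2 * π * N * α * (1 - α)) * (N.choose n : ℝ) * α ^ n * (1 - α) ^ (N - n) - 1)
    (tendsto_sub_nhds_zero_iff.mpr hlim)
end

section
/- Let κ > 0 and α ∈ (0,1). Then for every integer N ≥ 1, | ∑_{j=⌈Nα⌉}^{⌊Nα + N^{1/4}⌋} (j − Nα)·e^{−κ(j−Nα)} − e^{−κ(⌈Nα⌉−Nα)}·( e^{−κ}/(1−e^{−κ})² + (⌈Nα⌉−Nα)/(1−e^{−κ}) ) | ≤ 4e^{−1}·exp(−(κ/2)(N^{1/4}−1)) / ( κ·(1−e^{−κ})² ). -/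
/-!
Put `δ = ⌈y⌉ - y` with `y = Nα`. Reindexing by `k = j - ⌈y⌉`, the sum is a partial sum of the
series `∑ₖ (k + δ) e^{-κ(k + δ)} = e^{-κδ} ∑ₖ (k + δ) xᵏ` with `x = e^{-κ}`, whose value is the
subtracted term. The error is the tail of that series, which starts at an argument `s ≥ N^{1/4}`.
From `t e^{-κt} ≤ (2 / (eκ)) e^{-κt/2}` the tail is dominated by a geometric series of ratio
`r = e^{-κ/2}`, and `r / (1 - r) ≤ 2 / (1 - r²)²` puts its sum in the stated form.
-/

open Real

theorem Int.sum_Icc_eq_sum_range {M : Type*} [AddCommMonoid M] (g : ℤ → M) (a b : ℤ) :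
    ∑ j ∈ Finset.Icc a b, g j = ∑ k ∈ Finset.range (b + 1 - a).toNat, g (a + k) := by
  rw [Int.Icc_eq_finset_map, Finset.sum_map]
  rfl

theorem hasSum_add_mul_geometric {𝕜 : Type*} [NormedDivisionRing 𝕜] {ξ : 𝕜} (hξ : ‖ξ‖ < 1)
    (δ : 𝕜) : HasSum (fun k : ℕ => (k + δ) * ξ ^ k) (ξ / (1 - ξ) ^ 2 + δ / (1 - ξ)) := by
  simpa [add_mul, div_eq_mul_inv] using
    (hasSum_coe_mul_geometric_of_norm_lt_one hξ).add
      ((hasSum_geometric_of_norm_lt_one hξ).mul_left δ)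

theorem div_one_sub_le_two_div_one_sub_sq_sq {r : ℝ} (h0 : 0 ≤ r) (h1 : r < 1) :
    r / (1 - r) ≤ 2 / (1 - r ^ 2) ^ 2 := by
  have h1r : 0 < 1 - r := by linarith
  have h1r2 : 0 < 1 - r ^ 2 := by nlinarith
  rw [div_le_div_iff₀ h1r (by positivity)]
  -- `(1 - r²)² = (1 - r)² (1 + r)²` and `r (1 - r) (1 + r)² ≤ 1`
  nlinarith [mul_nonneg (mul_nonneg h0 h1r.le) (sq_nonneg (1 + r)), sq_nonneg (1 - 2 * r),
    mul_nonneg h1r.le (sq_nonneg (1 - 2 * r)), mul_nonneg (mul_nonneg h0 h1r.le) h1r.le]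

section ExpWeighted

variable {κ : ℝ}

theorem mul_exp_neg_mul_le (hκ : 0 < κ) (t : ℝ) :
    t * exp (-(κ * t)) ≤ 2 * exp (-1) / κ * exp (-(κ / 2 * t)) := by
  have key := mul_exp_neg_le_exp_neg_one (κ / 2 * t)
  have hsplit : exp (-(κ * t)) = exp (-(κ / 2 * t)) * exp (-(κ / 2 * t)) := by
    rw [← exp_add]
    ring_nf
  calc t * exp (-(κ * t)) = 2 / κ * (κ / 2 * t * exp (-(κ / 2 * t))) * exp (-(κ / 2 * t)) := by
        rw [hsplit]
        field_simp
    _ ≤ 2 / κ * exp (-1) * exp (-(κ / 2 * t)) := by gcongr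
    _ = 2 * exp (-1) / κ * exp (-(κ / 2 * t)) := by ring

theorem exp_neg_lt_one (hκ : 0 < κ) : exp (-κ) < 1 := Real.exp_lt_one_iff.mpr (neg_lt_zero.mpr hκ)

theorem hasSum_mul_exp_neg_mul_add (hκ : 0 < κ) (δ : ℝ) :
    HasSum (fun k : ℕ => (k + δ) * exp (-(κ * (k + δ))))
      (exp (-(κ * δ)) * (exp (-κ) / (1 - exp (-κ)) ^ 2 + δ / (1 - exp (-κ)))) := by
  have hx : ‖exp (-κ)‖ < 1 := by
    rw [Real.norm_of_nonneg (exp_pos _).le]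
    exact exp_neg_lt_one hκ
  refine ((hasSum_add_mul_geometric hx δ).mul_left (exp (-(κ * δ)))).congr_fun fun k => ?_
  rw [← exp_nat_mul, mul_left_comm, ← exp_add]
  ring_nf

theorem tsum_mul_exp_neg_mul_add_le (hκ : 0 < κ) (s : ℝ) :
    ∑' k : ℕ, (k + s) * exp (-(κ * (k + s))) ≤
      2 * exp (-1) / κ * exp (-(κ / 2 * s)) / (1 - exp (-(κ / 2))) := by
  have hr := exp_neg_lt_one (half_pos hκ)
  have hgeom := (hasSum_geometric_of_lt_one (exp_pos _).le hr).mul_left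
    (2 * exp (-1) / κ * exp (-(κ / 2 * s)))
  refine (hasSum_mul_exp_neg_mul_add hκ s).summable.tsum_le_tsum (fun k => ?_) hgeom.summable
    |>.trans_eq (hgeom.tsum_eq.trans (div_eq_mul_inv _ _).symm)
  refine (mul_exp_neg_mul_le hκ _).trans_eq ?_
  rw [mul_assoc, ← exp_nat_mul, ← exp_add]
  ring_nf

theorem tsum_mul_exp_neg_mul_add_le_of_le (hκ : 0 < κ) {P s : ℝ} (hPs : P ≤ s) :
    ∑' k : ℕ, (k + s) * exp (-(κ * (k + s))) ≤
      4 * exp (-1) * exp (-(κ / 2) * (P - 1)) / (κ * (1 - exp (-κ)) ^ 2) := by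
  set r := exp (-(κ / 2))
  have hr0 : 0 < r := exp_pos _
  have hr1 : r < 1 := exp_neg_lt_one (half_pos hκ)
  have hrr : r ^ 2 = exp (-κ) := by rw [← exp_nat_mul]; ring_nf
  have hs : exp (-(κ / 2 * s)) ≤ exp (-(κ / 2) * (P - 1)) * r := by
    rw [← exp_add, exp_le_exp]
    nlinarith
  calc ∑' k : ℕ, (k + s) * exp (-(κ * (k + s)))
      ≤ 2 * exp (-1) / κ * exp (-(κ / 2 * s)) / (1 - r) := tsum_mul_exp_neg_mul_add_le hκ s
    _ ≤ 2 * exp (-1) / κ * (exp (-(κ / 2) * (P - 1)) * r) / (1 - r) := by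
        gcongr
    _ = 2 * exp (-1) / κ * exp (-(κ / 2) * (P - 1)) * (r / (1 - r)) := by ring
    _ ≤ 2 * exp (-1) / κ * exp (-(κ / 2) * (P - 1)) * (2 / (1 - r ^ 2) ^ 2) :=
        mul_le_mul_of_nonneg_left (div_one_sub_le_two_div_one_sub_sq_sq hr0.le hr1)
          (by positivity)
    _ = 4 * exp (-1) * exp (-(κ / 2) * (P - 1)) / (κ * (1 - exp (-κ)) ^ 2) := by
        rw [hrr]
        field_simp
        ring

theorem abs_sum_Icc_ceil_floor_sub_le (hκ : 0 < κ) (y P : ℝ) :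
    |(∑ j ∈ Finset.Icc ⌈y⌉ ⌊y + P⌋, ((j : ℝ) - y) * exp (-(κ * ((j : ℝ) - y)))) -
      exp (-(κ * ((⌈y⌉ : ℝ) - y))) *
        (exp (-κ) / (1 - exp (-κ)) ^ 2 + ((⌈y⌉ : ℝ) - y) / (1 - exp (-κ)))|
    ≤ 4 * exp (-1) * exp (-(κ / 2) * (P - 1)) / (κ * (1 - exp (-κ)) ^ 2) := by
  set δ : ℝ := (⌈y⌉ : ℝ) - y
  set m : ℕ := (⌊y + P⌋ + 1 - ⌈y⌉).toNat
  have hδ : 0 ≤ δ := sub_nonneg.mpr (Int.le_ceil y)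
  have hP : P ≤ m + δ := by
    have hm : ((⌊y + P⌋ + 1 - ⌈y⌉ : ℤ) : ℝ) ≤ m := by exact_mod_cast Int.self_le_toNat _
    have := Int.lt_floor_add_one (y + P)
    push_cast at hm
    linarith
  have hfull := hasSum_mul_exp_neg_mul_add hκ δ
  have hpartial : ∑ j ∈ Finset.Icc ⌈y⌉ ⌊y + P⌋, ((j : ℝ) - y) * exp (-(κ * ((j : ℝ) - y))) =
      ∑ k ∈ Finset.range m, ((k : ℝ) + δ) * exp (-(κ * ((k : ℝ) + δ))) := by
    rw [Int.sum_Icc_eq_sum_range]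
    refine Finset.sum_congr rfl fun k _ => ?_
    rw [show ((⌈y⌉ + k : ℤ) : ℝ) - y = k + δ by push_cast; ring]
  have htail : ∑' k : ℕ, (((k + m : ℕ) : ℝ) + δ) * exp (-(κ * (((k + m : ℕ) : ℝ) + δ))) =
      ∑' k : ℕ, ((k : ℝ) + (m + δ)) * exp (-(κ * ((k : ℝ) + (m + δ)))) := by
    push_cast
    simp only [add_assoc]
  have htail_nonneg : 0 ≤ ∑' k : ℕ, ((k : ℝ) + (m + δ)) * exp (-(κ * ((k : ℝ) + (m + δ)))) :=
    tsum_nonneg fun k => by positivity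
  rw [hpartial, ← hfull.tsum_eq, ← hfull.summable.sum_add_tsum_nat_add m, htail,
    sub_add_cancel_left, abs_neg, abs_of_nonneg htail_nonneg]
  exact tsum_mul_exp_neg_mul_add_le_of_le hκ hP

end ExpWeighted

theorem stmt7_general (κ α : ℝ) (hκ : 0 < κ)
    (N : ℕ) :
    |(∑ j ∈ Finset.Icc ⌈(N : ℝ) * α⌉ ⌊(N : ℝ) * α + (N : ℝ) ^ ((1 : ℝ) / 4)⌋,
        ((j : ℝ) - (N : ℝ) * α) * Real.exp (-(κ * ((j : ℝ) - (N : ℝ) * α)))) -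
      Real.exp (-(κ * ((⌈(N : ℝ) * α⌉ : ℝ) - (N : ℝ) * α))) *
        (Real.exp (-κ) / (1 - Real.exp (-κ)) ^ 2 +
          ((⌈(N : ℝ) * α⌉ : ℝ) - (N : ℝ) * α) / (1 - Real.exp (-κ)))|
    ≤ 4 * Real.exp (-1) * Real.exp (-(κ / 2) * ((N : ℝ) ^ ((1 : ℝ) / 4) - 1)) /
        (κ * (1 - Real.exp (-κ)) ^ 2) :=
  abs_sum_Icc_ceil_floor_sub_le hκ _ _

theorem stmt7 (κ α : ℝ) (hκ : 0 < κ) (hα0 : 0 < α) (hα1 : α < 1)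
    (N : ℕ) (hN : 1 ≤ N) :
    |(∑ j ∈ Finset.Icc ⌈(N : ℝ) * α⌉ ⌊(N : ℝ) * α + (N : ℝ) ^ ((1 : ℝ) / 4)⌋,
        ((j : ℝ) - (N : ℝ) * α) * Real.exp (-(κ * ((j : ℝ) - (N : ℝ) * α)))) -
      Real.exp (-(κ * ((⌈(N : ℝ) * α⌉ : ℝ) - (N : ℝ) * α))) *
        (Real.exp (-κ) / (1 - Real.exp (-κ)) ^ 2 +
          ((⌈(N : ℝ) * α⌉ : ℝ) - (N : ℝ) * α) / (1 - Real.exp (-κ)))|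
    ≤ 4 * Real.exp (-1) * Real.exp (-(κ / 2) * ((N : ℝ) ^ ((1 : ℝ) / 4) - 1)) /
        (κ * (1 - Real.exp (-κ)) ^ 2) :=
  stmt7_general κ α hκ N
end
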